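/- arXiv:1503.00193 — 12 statements merged into one kernel-verified Lean document; each statement's English description precedes it below -/
import Mathlib

section
/- For every δ > 0 and every affine-linear function f : ℝⁿ → ℝ, the relation {(x, x') ∈ ℝⁿ × ℝⁿ : f(x) > 0 ∧ f(x') < f(x) − δ} is well-founded. (Every instantiation of the Podelski–Rybalchenko ranking template defines a well-founded relation.) -/
/-- Every instantiation of the Podelski–Rybalchenko ranking template defines a
well-founded relation. -/
theorem pr_template_wellFounded {n : ℕ} (δ : ℝ) (hδ : 0 < δ)
    (f : (Fin n → ℝ) → ℝ)
    (hf : ∃ s : Fin n → ℝ, ∃ t : ℝ, ∀ x, f x = (∑ j, s j * x j) + t) :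
    WellFounded (fun x' x : Fin n → ℝ => f x > 0 ∧ f x' < f x - δ) := by
  have h : Subrelation (fun x' x : Fin n → ℝ => f x > 0 ∧ f x' < f x - δ)
      (InvImage Nat.lt (fun x => ⌈f x / δ⌉₊)) := by
    intro x' x ⟨hpos, hdec⟩
    have hb : 0 < f x / δ := div_pos hpos hδ
    have hab : f x' / δ < f x / δ - 1 := by
      rw [div_sub' hδ.ne', div_lt_div_iff₀ hδ hδ]
      nlinarith
    have key : (⌈f x' / δ⌉₊ : ℝ) < f x / δ := by
      rcases le_or_gt (f x' / δ) 0 with h0 | h0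
      · rwa [Nat.ceil_eq_zero.mpr h0, Nat.cast_zero]
      · have := Nat.ceil_lt_add_one h0.le
        linarith
    exact Nat.lt_ceil.mpr key
  exact Subrelation.wf h (InvImage.wf _ Nat.lt_wfRel.wf)
end

section
/- For every k ≥ 1, all reals δ₁, …, δ_k > 0, and all affine-linear functions f₁, …, f_k : ℝⁿ → ℝ, the k-phase relation {(x, x') ∈ ℝⁿ × ℝⁿ : (∃ i ∈ {1,…,k}, fᵢ(x) > 0) ∧ f₁(x') < f₁(x) − δ₁ ∧ (∀ i ∈ {2,…,k}, fᵢ(x') < fᵢ(x) − δᵢ ∨ fᵢ₋₁(x) > 0)} is well-founded. (The k-phase ranking template is a linear ranking template.) -/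
/-- The k-phase ranking template is a linear ranking template:
every instantiation defines a well-founded relation. -/
theorem kPhase_template_wellFounded {n : ℕ} (k : ℕ) (hk : 1 ≤ k)
    (δ : ℕ → ℝ) (hδ : ∀ i ∈ Finset.Icc 1 k, 0 < δ i)
    (f : ℕ → (Fin n → ℝ) → ℝ)
    (hf : ∀ i ∈ Finset.Icc 1 k,
      ∃ s : Fin n → ℝ, ∃ t : ℝ, ∀ x, f i x = (∑ j, s j * x j) + t) :
    WellFounded (fun x' x : Fin n → ℝ =>
      (∃ i ∈ Finset.Icc 1 k, f i x > 0) ∧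
      f 1 x' < f 1 x - δ 1 ∧
      (∀ i ∈ Finset.Icc 2 k, f i x' < f i x - δ i ∨ f (i - 1) x > 0)) := by
  set r : (Fin n → ℝ) → (Fin n → ℝ) → Prop := fun x' x =>
      (∃ i ∈ Finset.Icc 1 k, f i x > 0) ∧
      f 1 x' < f 1 x - δ 1 ∧
      (∀ i ∈ Finset.Icc 2 k, f i x' < f i x - δ i ∨ f (i - 1) x > 0) with hr
  show WellFounded r
  by_contra hwf
  rw [WellFounded.wellFounded_iff_has_min] at hwf
  push_neg at hwf
  obtain ⟨s, hs, hmin⟩ := hwf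
  -- every element of s has an r-predecessor in s; build a descending sequence
  choose F hFs hFr using hmin
  obtain ⟨a, ha⟩ := hs
  let Fs : {x // x ∈ s} → {x // x ∈ s} := fun x => ⟨F x.1 x.2, hFs x.1 x.2⟩
  let G : ℕ → {x // x ∈ s} := fun m => Fs^[m] ⟨a, ha⟩
  set g : ℕ → (Fin n → ℝ) := fun m => (G m).1 with hgdef
  have hstep : ∀ m : ℕ, r (g (m+1)) (g m) := by
    intro m
    have hG : G (m+1) = Fs (G m) := Function.iterate_succ_apply' Fs m _
    have : g (m+1) = F (g m) (G m).2 := by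
      simp only [hgdef, hG]
      rfl
    rw [this]
    exact hFr (g m) (G m).2
  -- main induction: for every i ≤ k, eventually all f j with j ∈ [1,i] are ≤ 0
  have main : ∀ i ≤ k, ∃ N, ∀ m ≥ N, ∀ j ∈ Finset.Icc 1 i, f j (g m) ≤ 0 := by
    intro i hik
    induction i with
    | zero => exact ⟨0, by simp⟩
    | succ i ih =>
      obtain ⟨N, hN⟩ := ih (le_trans (Nat.le_succ i) hik)
      have hδi : 0 < δ (i+1) := hδ (i+1) (Finset.mem_Icc.mpr ⟨Nat.succ_le_succ (Nat.zero_le i), hik⟩)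
      have hdec : ∀ m ≥ N, f (i+1) (g (m+1)) < f (i+1) (g m) - δ (i+1) := by
        intro m hm
        obtain ⟨-, h1, h2⟩ := hstep m
        rcases Nat.eq_zero_or_pos i with hi0 | hi1
        · subst hi0; exact h1
        · have := h2 (i+1) (Finset.mem_Icc.mpr ⟨Nat.succ_le_succ hi1, hik⟩)
          rcases this with h | h
          · exact h
          · exact absurd h (not_lt.mpr (hN m hm i (Finset.mem_Icc.mpr ⟨hi1, le_rfl⟩)))
      have hiter : ∀ p : ℕ, f (i+1) (g (N+p)) ≤ f (i+1) (g N) - p * δ (i+1) := by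
        intro p
        induction p with
        | zero => simp
        | succ p ihp =>
          have h := hdec (N+p) (Nat.le_add_right N p)
          push_cast
          have h' : f (i+1) (g (N+(p+1))) < f (i+1) (g (N+p)) - δ (i+1) := by
            rw [← Nat.add_assoc]; exact h
          nlinarith
      obtain ⟨p, hp⟩ := exists_nat_ge (f (i+1) (g N) / δ (i+1))
      have hp' : f (i+1) (g N) ≤ p * δ (i+1) := by
        rw [div_le_iff₀ hδi] at hp; exact hp
      refine ⟨N + p, fun m hm j hj => ?_⟩
      rw [Finset.mem_Icc] at hj
      rcases Nat.lt_succ_iff_lt_or_eq.mp (Nat.lt_succ_of_le hj.2) with hji | hji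
      · exact hN m (le_trans (Nat.le_add_right N p) hm) j
          (Finset.mem_Icc.mpr ⟨hj.1, Nat.lt_succ_iff.mp hji⟩)
      · subst hji
        obtain ⟨q, hq⟩ := Nat.exists_eq_add_of_le hm
        have h1 := hiter (p + q)
        have hle : (p : ℝ) * δ (i+1) ≤ ((p : ℝ) + (q : ℝ)) * δ (i+1) := by
          have hq0 : (0:ℝ) ≤ (q:ℝ) := Nat.cast_nonneg q
          nlinarith
        rw [hq, Nat.add_assoc]
        push_cast at h1 ⊢
        linarith
  obtain ⟨N, hN⟩ := main k le_rfl
  obtain ⟨i, hi, hpos⟩ := (hstep N).1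
  exact absurd hpos (not_lt.mpr (hN N le_rfl i hi))
end

section
/- For every k ≥ 1, every real δ > 0, and all affine-linear functions f₁, …, f_k : ℝⁿ → ℝ, the k-nested relation {(x, x') ∈ ℝⁿ × ℝⁿ : f_k(x) > 0 ∧ f₁(x') < f₁(x) − δ ∧ (∀ i ∈ {2,…,k}, fᵢ(x') < fᵢ(x) + fᵢ₋₁(x))} is well-founded. (The k-nested ranking template is a linear ranking template.) -/
/-- If a real sequence eventually decays by at least `δ > 0` at each step,
it tends to `-∞`. -/
lemma tendsto_atBot_of_eventually_decay {g : ℕ → ℝ} {δ : ℝ} (hδ : 0 < δ) {M : ℕ}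
    (h : ∀ m, M ≤ m → g (m + 1) ≤ g m - δ) :
    Filter.Tendsto g Filter.atTop Filter.atBot := by
  have key : ∀ p : ℕ, g (M + p) ≤ g M - p * δ := by
    intro p
    induction p with
    | zero => simp
    | succ p ih =>
      have h1 := h (M + p) (Nat.le_add_right _ _)
      have : g (M + (p + 1)) = g ((M + p) + 1) := by ring_nf
      rw [this]
      push_cast
      nlinarith
  rw [Filter.tendsto_atBot]
  intro b
  obtain ⟨p, hp⟩ := exists_nat_ge ((g M - b) / δ)
  rw [Filter.eventually_atTop]
  refine ⟨M + p, fun m hm => ?_⟩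
  obtain ⟨q, rfl⟩ := Nat.exists_eq_add_of_le hm
  have h1 := key (p + q)
  rw [← Nat.add_assoc] at h1
  have h2 : g M - b ≤ (p : ℝ) * δ := by
    have := mul_le_mul_of_nonneg_right hp hδ.le
    rwa [div_mul_cancel₀ _ hδ.ne'] at this
  have h3 : (p : ℝ) * δ ≤ ((p + q : ℕ) : ℝ) * δ := by
    push_cast
    nlinarith [Nat.cast_nonneg (α := ℝ) q, hδ.le]
  linarith

/-- A relation with no infinite descending sequence is well-founded. -/
lemma wellFounded_of_no_descending_seq {α : Type*} {r : α → α → Prop}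
    (H : ∀ a : ℕ → α, ¬ ∀ m, r (a (m + 1)) (a m)) : WellFounded r := by
  by_contra hwf
  have h0 : ∃ a, ¬ Acc r a := by
    by_contra h
    push_neg at h
    exact hwf ⟨h⟩
  obtain ⟨a0, ha0⟩ := h0
  have next : ∀ x : {x : α // ¬ Acc r x}, {y : {x : α // ¬ Acc r x} // r y.1 x.1} := by
    intro x
    have h := exists_not_acc_lt_of_not_acc x.2
    exact ⟨⟨h.choose, h.choose_spec.1⟩, h.choose_spec.2⟩
  let seq : ℕ → {x : α // ¬ Acc r x} := fun m => Nat.rec ⟨a0, ha0⟩ (fun _ x => (next x).1) m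
  exact H (fun m => (seq m).1) (fun m => (next (seq m)).2)

/-- The k-nested ranking template is a linear ranking template:
every instantiation defines a well-founded relation. -/
theorem kNested_template_wellFounded {n : ℕ} (k : ℕ) (hk : 1 ≤ k)
    (δ : ℝ) (hδ : 0 < δ)
    (f : ℕ → (Fin n → ℝ) → ℝ)
    (hf : ∀ i ∈ Finset.Icc 1 k,
      ∃ s : Fin n → ℝ, ∃ t : ℝ, ∀ x, f i x = (∑ j, s j * x j) + t) :
    WellFounded (fun x' x : Fin n → ℝ =>
      f k x > 0 ∧
      f 1 x' < f 1 x - δ ∧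
      (∀ i ∈ Finset.Icc 2 k, f i x' < f i x + f (i - 1) x)) := by
  apply wellFounded_of_no_descending_seq
  intro a' ha
  have step : ∀ m : ℕ,
      f k (a' m) > 0 ∧
      f 1 (a' (m + 1)) < f 1 (a' m) - δ ∧
      (∀ i ∈ Finset.Icc 2 k, f i (a' (m + 1)) < f i (a' m) + f (i - 1) (a' m)) := by
    intro m
    exact ha m
  -- every f i (a' m) tends to -∞ for 1 ≤ i ≤ k
  have main : ∀ i : ℕ, 1 ≤ i → i ≤ k →
      Filter.Tendsto (fun m => f i (a' m)) Filter.atTop Filter.atBot := by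
    intro i h1i
    induction i, h1i using Nat.le_induction with
    | base =>
      intro _
      exact tendsto_atBot_of_eventually_decay hδ (M := 0)
        (fun m _ => ((step m).2.1).le.trans (le_refl _))
    | succ i hi ih =>
      intro hik
      have hik' : i ≤ k := Nat.le_of_succ_le hik
      have hprev := ih hik'
      -- eventually f i (a' m) ≤ -δ
      have hev : ∀ᶠ m in Filter.atTop, f i (a' m) ≤ -δ :=
        hprev.eventually_le_atBot (-δ)
      rw [Filter.eventually_atTop] at hev
      obtain ⟨M, hM⟩ := hev
      apply tendsto_atBot_of_eventually_decay hδ (M := M)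
      intro m hm
      have hmem : i + 1 ∈ Finset.Icc 2 k := by
        rw [Finset.mem_Icc]
        omega
      have h2 := (step m).2.2 (i + 1) hmem
      simp only [Nat.add_sub_cancel] at h2
      have h3 := hM m hm
      linarith
  have hk' := main k hk le_rfl
  have : ∀ᶠ m in Filter.atTop, f k (a' m) ≤ -1 := hk'.eventually_le_atBot (-1)
  rw [Filter.eventually_atTop] at this
  obtain ⟨M, hM⟩ := this
  have := (step M).1
  have := hM M le_rfl
  linarith
end

section
/- For every k ≥ 1, every real δ > 0, and all affine-linear functions f₁, …, f_k, g₁, …, g_k : ℝⁿ → ℝ, the k-piece relation {(x, x') ∈ ℝⁿ × ℝⁿ : (∀ i, j ∈ {1,…,k}, gᵢ(x) < 0 ∨ gⱼ(x') < 0 ∨ fⱼ(x') < fᵢ(x) − δ) ∧ (∀ i ∈ {1,…,k}, fᵢ(x) > 0) ∧ (∃ i ∈ {1,…,k}, gᵢ(x) ≥ 0)} is well-founded. (The k-piece ranking template is a linear ranking template.) -/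
theorem wf_of_no_descending_seq {α : Type*} {r : α → α → Prop}
    (h : ∀ a : ℕ → α, ¬ ∀ m, r (a (m + 1)) (a m)) : WellFounded r := by
  by_contra hwf
  have hex : ∃ x, ¬ Acc r x := by
    by_contra h2; push_neg at h2; exact hwf ⟨h2⟩
  obtain ⟨x, hx⟩ := hex
  have key : ∀ y, ¬ Acc r y → ∃ z, r z y ∧ ¬ Acc r z := by
    intro y hy
    by_contra h3; push_neg at h3
    exact hy (Acc.intro y h3)
  choose nxt hr hacc using key
  let seq : ℕ → {y : α // ¬ Acc r y} := fun m =>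
    Nat.rec ⟨x, hx⟩ (fun _ p => ⟨nxt p.1 p.2, hacc p.1 p.2⟩) m
  exact h (fun m => (seq m).1) (fun m => hr (seq m).1 (seq m).2)

/-- The k-piece ranking template is a linear ranking template:
every instantiation defines a well-founded relation. -/
theorem kPiece_template_wellFounded {n : ℕ} (k : ℕ) (hk : 1 ≤ k)
    (δ : ℝ) (hδ : 0 < δ)
    (f g : ℕ → (Fin n → ℝ) → ℝ)
    (hf : ∀ i ∈ Finset.Icc 1 k,
      ∃ s : Fin n → ℝ, ∃ t : ℝ, ∀ x, f i x = (∑ j, s j * x j) + t)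
    (hg : ∀ i ∈ Finset.Icc 1 k,
      ∃ s : Fin n → ℝ, ∃ t : ℝ, ∀ x, g i x = (∑ j, s j * x j) + t) :
    WellFounded (fun x' x : Fin n → ℝ =>
      (∀ i ∈ Finset.Icc 1 k, ∀ j ∈ Finset.Icc 1 k,
        g i x < 0 ∨ g j x' < 0 ∨ f j x' < f i x - δ) ∧
      (∀ i ∈ Finset.Icc 1 k, f i x > 0) ∧
      (∃ i ∈ Finset.Icc 1 k, g i x ≥ 0)) := by
  apply wf_of_no_descending_seq
  intro e hstep
  -- choose indices with g (idx m) (e m) ≥ 0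
  choose idx hidx hgidx using fun m => (hstep m).2.2
  have hdec : ∀ m : ℕ, f (idx (m+1)) (e (m+1)) < f (idx m) (e m) - δ := by
    intro m
    rcases (hstep m).1 (idx m) (hidx m) (idx (m+1)) (hidx (m+1)) with h | h | h
    · exact absurd (hgidx m) (not_le.2 h)
    · exact absurd (hgidx (m+1)) (not_le.2 h)
    · exact h
  have hpos : ∀ m : ℕ, 0 < f (idx m) (e m) := fun m => (hstep m).2.1 _ (hidx m)
  have hle : ∀ m : ℕ, f (idx m) (e m) ≤ f (idx 0) (e 0) - m * δ := by
    intro m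
    induction m with
    | zero => simp
    | succ m ih =>
      have := hdec m
      push_cast
      nlinarith
  obtain ⟨m, hm⟩ := exists_nat_gt (f (idx 0) (e 0) / δ)
  have h1 := hle m
  have h2 := hpos m
  have : f (idx 0) (e 0) < m * δ := by rwa [div_lt_iff₀ hδ] at hm
  linarith
end

section
/- For every k ≥ 1, all reals δ₁, …, δ_k > 0, and all affine-linear functions f₁, …, f_k : ℝⁿ → ℝ, the k-lexicographic relation {(x, x') ∈ ℝⁿ × ℝⁿ : (∀ i ∈ {1,…,k}, fᵢ(x) > 0) ∧ (∀ i ∈ {1,…,k−1}, fᵢ(x') ≤ fᵢ(x) ∨ ∃ j < i, fⱼ(x') < fⱼ(x) − δⱼ) ∧ (∃ i ∈ {1,…,k}, fᵢ(x') < fᵢ(x) − δᵢ)} is well-founded. (The k-lexicographic ranking template is a linear ranking template.) -/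
private lemma wf_of_no_descending_chain {α : Sort*} (r : α → α → Prop)
    (h : ∀ g : ℕ → α, ¬ ∀ m, r (g (m + 1)) (g m)) : WellFounded r := by
  by_contra hw
  have hex : ∃ a, ¬ Acc r a := by
    by_contra h'
    push_neg at h'
    exact hw ⟨h'⟩
  obtain ⟨a, ha⟩ := hex
  have step : ∀ b, ¬ Acc r b → ∃ c, r c b ∧ ¬ Acc r c := by
    intro b hb
    by_contra hc
    push_neg at hc
    exact hb ⟨b, hc⟩
  choose F h1 h2 using step
  let g : ℕ → {x : α // ¬ Acc r x} := fun m =>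
    Nat.rec ⟨a, ha⟩ (fun _ p => ⟨F p.1 p.2, h2 p.1 p.2⟩) m
  exact h (fun m => (g m).1) (fun m => h1 (g m).1 (g m).2)

private lemma kLex_no_chain {n : ℕ} : ∀ (k : ℕ) (δ : ℕ → ℝ) (f : ℕ → (Fin n → ℝ) → ℝ),
    (∀ i ∈ Finset.Icc 1 k, 0 < δ i) → ∀ g : ℕ → Fin n → ℝ,
    ¬ (∀ m : ℕ,
      (∀ i ∈ Finset.Icc 1 k, f i (g m) > 0) ∧
      (∀ i ∈ Finset.Icc 1 (k - 1),
        f i (g (m+1)) ≤ f i (g m) ∨ ∃ j, 1 ≤ j ∧ j < i ∧ f j (g (m+1)) < f j (g m) - δ j) ∧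
      (∃ i ∈ Finset.Icc 1 k, f i (g (m+1)) < f i (g m) - δ i)) := by
  intro k
  induction k with
  | zero =>
    intro δ f hδ g hg
    obtain ⟨i, hi, _⟩ := (hg 0).2.2
    simp at hi
  | succ k ih =>
    intro δ f hδ g hg
    have h1mem : (1 : ℕ) ∈ Finset.Icc 1 (k+1) := by simp
    have hδ1 : 0 < δ 1 := hδ 1 h1mem
    -- f 1 is nonincreasing along g
    have mono1 : ∀ m : ℕ, f 1 (g (m+1)) ≤ f 1 (g m) := by
      intro m
      rcases Nat.eq_zero_or_pos k with hk0 | hk1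
      · subst hk0
        obtain ⟨i, hi, hdrop⟩ := (hg m).2.2
        have : i = 1 := by simpa using hi
        subst this
        linarith
      · have h1 : (1 : ℕ) ∈ Finset.Icc 1 (k + 1 - 1) := by
          simp [Nat.add_sub_cancel]; omega
        rcases (hg m).2.1 1 h1 with h | ⟨j, hj1, hj2, _⟩
        · exact h
        · omega
    have mono : ∀ a b : ℕ, a ≤ b → f 1 (g b) ≤ f 1 (g a) := by
      intro a b hab
      induction b, hab using Nat.le_induction with
      | base => exact le_refl _
      | succ b hb ihb => exact le_trans (mono1 b) ihb
    have pos1 : ∀ m, 0 < f 1 (g m) := fun m => (hg m).1 1 h1mem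
    by_cases H : ∀ N : ℕ, ∃ m : ℕ, N ≤ m ∧ f 1 (g (m+1)) < f 1 (g m) - δ 1
    · -- infinitely many drops in f 1 : contradiction
      choose t ht1 ht2 using H
      set u : ℕ → ℕ := fun j => Nat.rec (t 0) (fun _ prev => t (prev + 1)) j with hu
      have hu0 : u 0 = t 0 := rfl
      have hus : ∀ j, u (j+1) = t (u j + 1) := fun j => rfl
      have key : ∀ j : ℕ, f 1 (g (u j)) ≤ f 1 (g (u 0)) - j * δ 1 := by
        intro j
        induction j with
        | zero => simp
        | succ j ihj =>
          have h1 : u j + 1 ≤ u (j+1) := by rw [hus]; exact ht1 _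
          have h2 : f 1 (g (u (j+1))) ≤ f 1 (g (u j + 1)) := mono _ _ h1
          have h3 : f 1 (g (u j + 1)) < f 1 (g (u j)) - δ 1 := by
            cases j with
            | zero => exact ht2 0
            | succ j' => rw [hus]; exact ht2 _
          push_cast
          linarith
      obtain ⟨j, hj⟩ := exists_nat_gt (f 1 (g (u 0)) / δ 1)
      have : f 1 (g (u 0)) < j * δ 1 := by
        rwa [div_lt_iff₀ hδ1] at hj
      have := key j
      have := pos1 (u j)
      linarith
    · push_neg at H
      obtain ⟨N, hN⟩ := H
      have nodrop : ∀ m, N ≤ m → f 1 (g m) - δ 1 ≤ f 1 (g (m+1)) := hN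
      rcases Nat.eq_zero_or_pos k with hk0 | hk1
      · subst hk0
        obtain ⟨i, hi, hdrop⟩ := (hg N).2.2
        have : i = 1 := by simpa using hi
        subst this
        have := nodrop N le_rfl
        linarith
      · -- shift and apply IH
        refine ih (fun i => δ (i+1)) (fun i => f (i+1)) ?_ (fun m => g (N + m)) ?_
        · intro i hi
          apply hδ
          simp only [Finset.mem_Icc] at hi ⊢
          omega
        · intro m
          refine ⟨?_, ?_, ?_⟩
          · intro i hi
            apply (hg (N+m)).1
            simp only [Finset.mem_Icc] at hi ⊢
            omega
          · intro i hi
            simp only [Finset.mem_Icc] at hi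
            have hi1 : i + 1 ∈ Finset.Icc 1 (k + 1 - 1) := by
              simp only [Finset.mem_Icc]; omega
            have := (hg (N+m)).2.1 (i+1) hi1
            rcases this with h | ⟨j, hj1, hj2, hj3⟩
            · left
              have : N + m + 1 = N + (m + 1) := by ring
              rwa [this] at h
            · rcases Nat.lt_or_ge j 2 with hj | hj
              · exfalso
                have : j = 1 := by omega
                subst this
                have := nodrop (N+m) (by omega)
                linarith
              · right
                refine ⟨j - 1, by omega, by omega, ?_⟩
                show f (j - 1 + 1) (g (N + (m + 1))) < f (j - 1 + 1) (g (N + m)) - δ (j - 1 + 1)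
                rw [show j - 1 + 1 = j from by omega, show N + (m + 1) = N + m + 1 from by ring]
                exact hj3
          · obtain ⟨i, hi, hdrop⟩ := (hg (N+m)).2.2
            simp only [Finset.mem_Icc] at hi
            have hi2 : 2 ≤ i := by
              by_contra h
              have : i = 1 := by omega
              subst this
              have := nodrop (N+m) (by omega)
              linarith
            refine ⟨i - 1, by simp only [Finset.mem_Icc]; omega, ?_⟩
            show f (i - 1 + 1) (g (N + (m + 1))) < f (i - 1 + 1) (g (N + m)) - δ (i - 1 + 1)
            rw [show i - 1 + 1 = i from by omega, show N + (m + 1) = N + m + 1 from by ring]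
            exact hdrop

/-- The k-lexicographic ranking template is a linear ranking template:
every instantiation defines a well-founded relation. -/
theorem kLex_template_wellFounded {n : ℕ} (k : ℕ) (hk : 1 ≤ k)
    (δ : ℕ → ℝ) (hδ : ∀ i ∈ Finset.Icc 1 k, 0 < δ i)
    (f : ℕ → (Fin n → ℝ) → ℝ)
    (hf : ∀ i ∈ Finset.Icc 1 k,
      ∃ s : Fin n → ℝ, ∃ t : ℝ, ∀ x, f i x = (∑ j, s j * x j) + t) :
    WellFounded (fun x' x : Fin n → ℝ =>
      (∀ i ∈ Finset.Icc 1 k, f i x > 0) ∧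
      (∀ i ∈ Finset.Icc 1 (k - 1),
        f i x' ≤ f i x ∨ ∃ j, 1 ≤ j ∧ j < i ∧ f j x' < f j x - δ j) ∧
      (∃ i ∈ Finset.Icc 1 k, f i x' < f i x - δ i)) := by
  apply wf_of_no_descending_chain
  intro g
  exact kLex_no_chain k δ f hδ g
end

section
/- For every k ≥ 1, all reals δ₁, …, δ_k > 0, and all affine-linear functions f₁, …, f_k : ℝⁿ → ℝ, the k-parallel relation {(x, x') ∈ ℝⁿ × ℝⁿ : (∀ i ∈ {1,…,k}, fᵢ(x') ≤ fᵢ(x)) ∧ (∃ i ∈ {1,…,k}, fᵢ(x) > 0 ∧ fᵢ(x') < fᵢ(x) − δᵢ)} is well-founded. (The k-parallel ranking template is a linear ranking template.) -/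
/-- The k-parallel ranking template is a linear ranking template:
every instantiation defines a well-founded relation. -/
theorem kParallel_template_wellFounded {n : ℕ} (k : ℕ) (hk : 1 ≤ k)
    (δ : ℕ → ℝ) (hδ : ∀ i ∈ Finset.Icc 1 k, 0 < δ i)
    (f : ℕ → (Fin n → ℝ) → ℝ)
    (hf : ∀ i ∈ Finset.Icc 1 k,
      ∃ s : Fin n → ℝ, ∃ t : ℝ, ∀ x, f i x = (∑ j, s j * x j) + t) :
    WellFounded (fun x' x : Fin n → ℝ =>
      (∀ i ∈ Finset.Icc 1 k, f i x' ≤ f i x) ∧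
      (∃ i ∈ Finset.Icc 1 k, f i x > 0 ∧ f i x' < f i x - δ i)) := by
  set N : (Fin n → ℝ) → ℕ :=
    fun x => ∑ i ∈ Finset.Icc 1 k, ⌈max (f i x) 0 / δ i⌉₊ with hN
  have key : ∀ x' x : Fin n → ℝ,
      ((∀ i ∈ Finset.Icc 1 k, f i x' ≤ f i x) ∧
       (∃ i ∈ Finset.Icc 1 k, f i x > 0 ∧ f i x' < f i x - δ i)) → N x' < N x := by
    rintro x' x ⟨hall, i, hi, hipos, hidrop⟩
    apply Finset.sum_lt_sum
    · intro j hj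
      exact Nat.ceil_le_ceil <|
        div_le_div_of_nonneg_right (max_le_max (hall j hj) le_rfl) (hδ j hj).le
    · refine ⟨i, hi, ?_⟩
      have hδi := hδ i hi
      have hb1 : (1 : ℕ) ≤ ⌈max (f i x) 0 / δ i⌉₊ := by
        have : (0 : ℝ) < max (f i x) 0 / δ i := by
          apply div_pos _ hδi
          simpa [hipos] using le_max_left (f i x) 0
        exact Nat.one_le_iff_ne_zero.mpr (by positivity)
      -- show ⌈max (f i x') 0 / δ i⌉₊ ≤ ⌈max (f i x) 0 / δ i⌉₊ - 1
      have hle : ⌈max (f i x') 0 / δ i⌉₊ ≤ ⌈max (f i x) 0 / δ i⌉₊ - 1 := by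
        rw [max_eq_left hipos.le] at hb1 ⊢
        rw [Nat.ceil_le]
        push_cast [hb1]
        rcases le_or_gt (f i x') 0 with h0 | h0
        · rw [max_eq_right h0]
          have : (1 : ℝ) ≤ ⌈f i x / δ i⌉₊ := by exact_mod_cast hb1
          simp only [zero_div]
          linarith
        · rw [max_eq_left h0.le]
          have h1 : f i x' / δ i < f i x / δ i - 1 := by
            rw [div_sub' (ne_of_gt hδi)]
            exact div_lt_div_of_pos_right (by linarith) hδi
          have h2 : f i x / δ i ≤ ⌈f i x / δ i⌉₊ := Nat.le_ceil _
          linarith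
      omega
  exact Subrelation.wf (fun h => key _ _ h) (InvImage.wf N Nat.lt_wfRel.wf)
end

section
/- (Motzkin's Transposition Theorem) Let A be a real m×n matrix, C a real ℓ×n matrix, b ∈ ℝᵐ, and d ∈ ℝˡ. Then the following are equivalent: (M1) for all x ∈ ℝⁿ, it is not the case that A x ≤ b and C x < d (inequalities componentwise); (M2) there exist λ ∈ ℝᵐ and μ ∈ ℝˡ with λ ≥ 0 and μ ≥ 0 (componentwise), λᵀA + μᵀC = 0 (the zero row vector in ℝⁿ), λᵀb + μᵀd ≤ 0, and (λᵀb < 0 or μ ≠ 0). -/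
lemma dot_sub_smul {p : ℕ} (v z u : Fin p → ℝ) (c : ℝ) :
    ∑ j, v j * (z j - c * u j) = ∑ j, v j * z j - c * ∑ j, v j * u j := by
  rw [Finset.mul_sum, ← Finset.sum_sub_distrib]
  exact Finset.sum_congr rfl fun j _ => by ring

lemma sub_mul_dot {p : ℕ} (v u z : Fin p → ℝ) (c : ℝ) :
    ∑ j, (v j - c * u j) * z j = ∑ j, v j * z j - c * ∑ j, u j * z j := by
  rw [Finset.mul_sum, ← Finset.sum_sub_distrib]
  exact Finset.sum_congr rfl fun j _ => by ring

/-- Homogeneous Farkas lemma (Bartl-style induction on number of rows). -/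
theorem farkas_core : ∀ (k : ℕ) {p : ℕ} (N : Fin k → Fin p → ℝ) (w : Fin p → ℝ),
    (∀ z : Fin p → ℝ, (∀ i, ∑ j, N i j * z j ≤ 0) → ∑ j, w j * z j ≤ 0) →
    ∃ y : Fin k → ℝ, (∀ i, 0 ≤ y i) ∧ ∀ j, ∑ i, y i * N i j = w j := by
  intro k
  induction k with
  | zero =>
    intro p N w h
    have hw : ∀ j, w j = 0 := by
      have h1 := h w (fun i => i.elim0)
      intro j
      have hsq : ∀ j' ∈ Finset.univ, (0:ℝ) ≤ w j' * w j' := fun j' _ => mul_self_nonneg _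
      have := Finset.sum_nonneg hsq
      have hz : ∑ j', w j' * w j' = 0 := le_antisymm h1 this
      have := (Finset.sum_eq_zero_iff_of_nonneg hsq).mp hz j (Finset.mem_univ j)
      exact (mul_self_eq_zero).mp this
    exact ⟨0, fun i => le_refl 0, fun j => by simp [hw]⟩
  | succ k ih =>
    intro p N w h
    by_cases hc : ∀ z : Fin p → ℝ, (∀ i : Fin k, ∑ j, N i.succ j * z j ≤ 0) →
        ∑ j, w j * z j ≤ 0
    · obtain ⟨y', hy', hsum⟩ := ih (fun i => N i.succ) w hc
      refine ⟨Fin.cons 0 y', ?_, ?_⟩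
      · intro i
        refine Fin.cases ?_ ?_ i
        · simp
        · intro i'; simpa using hy' i'
      · intro j
        rw [Fin.sum_univ_succ]
        simpa using hsum j
    · push_neg at hc
      obtain ⟨x₀, hx₀, hwx₀⟩ := hc
      have ha : 0 < ∑ j, N 0 j * x₀ j := by
        by_contra h0
        push_neg at h0
        have := h x₀ (fun i => Fin.cases h0 hx₀ i)
        linarith
      obtain ⟨α, hα⟩ : ∃ α : ℝ, α = ∑ j, N 0 j * x₀ j := ⟨_, rfl⟩
      have ha' : 0 < α := hα ▸ ha
      obtain ⟨e, he⟩ : ∃ e : Fin p → ℝ, e = fun j => x₀ j / α := ⟨_, rfl⟩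
      have hdot : ∀ v : Fin p → ℝ, ∑ j, v j * e j = (∑ j, v j * x₀ j) / α := by
        intro v
        rw [Finset.sum_div]
        exact Finset.sum_congr rfl fun j _ => by rw [he]; ring
      have hae : ∑ j, N 0 j * e j = 1 := by
        rw [hdot, ← hα, div_self (ne_of_gt ha')]
      obtain ⟨M', hM'⟩ : ∃ M' : Fin k → Fin p → ℝ,
          M' = fun i j => N i.succ j - (∑ j', N i.succ j' * e j') * N 0 j := ⟨_, rfl⟩
      obtain ⟨w', hw'⟩ : ∃ w' : Fin p → ℝ,
          w' = fun j => w j - (∑ j', w j' * e j') * N 0 j := ⟨_, rfl⟩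
      have keyM : ∀ (i : Fin k) (z : Fin p → ℝ), ∑ j, M' i j * z j
          = ∑ j, N i.succ j * z j - (∑ j', N i.succ j' * e j') * ∑ j, N 0 j * z j := by
        intro i z
        rw [hM']
        exact sub_mul_dot (N i.succ) (N 0) z _
      have keyw : ∀ z : Fin p → ℝ, ∑ j, w' j * z j
          = ∑ j, w j * z j - (∑ j', w j' * e j') * ∑ j, N 0 j * z j := by
        intro z
        rw [hw']
        exact sub_mul_dot w (N 0) z _
      have hc' : ∀ z : Fin p → ℝ, (∀ i : Fin k, ∑ j, M' i j * z j ≤ 0) →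
          ∑ j, w' j * z j ≤ 0 := by
        intro z hz
        obtain ⟨t, ht⟩ : ∃ t : ℝ, t = ∑ j, N 0 j * z j := ⟨_, rfl⟩
        obtain ⟨Pz, hPz⟩ : ∃ Pz : Fin p → ℝ, Pz = fun j => z j - t * e j := ⟨_, rfl⟩
        have hdotP : ∀ v : Fin p → ℝ,
            ∑ j, v j * Pz j = ∑ j, v j * z j - t * ∑ j, v j * e j := by
          intro v
          rw [hPz]
          exact dot_sub_smul v z e t
        have hP0 : ∑ j, N 0 j * Pz j ≤ 0 := by
          rw [hdotP, hae, ← ht]; simp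
        have hPs : ∀ i : Fin k, ∑ j, N (Fin.succ i) j * Pz j ≤ 0 := by
          intro i
          rw [hdotP]
          have h1 := hz i
          rw [keyM i z, ← ht] at h1
          linarith
        have h2 := h Pz (fun i => Fin.cases hP0 hPs i)
        rw [hdotP] at h2
        rw [keyw, ← ht]
        linarith
      obtain ⟨y', hy', hsum⟩ := ih M' w' hc'
      obtain ⟨y₀, hy₀⟩ : ∃ y₀ : ℝ,
          y₀ = (∑ j, w j * e j) - ∑ i, y' i * (∑ j, N i.succ j * e j) := ⟨_, rfl⟩
      have hwe : 0 < ∑ j, w j * e j := by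
        rw [hdot]; exact div_pos hwx₀ ha'
      have hne : ∀ i : Fin k, ∑ j, N i.succ j * e j ≤ 0 := by
        intro i
        rw [hdot]
        exact div_nonpos_of_nonpos_of_nonneg (hx₀ i) (le_of_lt ha')
      have hy₀pos : 0 ≤ y₀ := by
        have hs : ∑ i, y' i * (∑ j, N i.succ j * e j) ≤ 0 :=
          Finset.sum_nonpos fun i _ => mul_nonpos_of_nonneg_of_nonpos (hy' i) (hne i)
        rw [hy₀]; linarith
      refine ⟨Fin.cons y₀ y', ?_, ?_⟩
      · intro i
        refine Fin.cases ?_ ?_ i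
        · simpa using hy₀pos
        · intro i'; simpa using hy' i'
      · intro j
        rw [Fin.sum_univ_succ]
        simp only [Fin.cons_zero, Fin.cons_succ]
        have expand : ∑ i, y' i * N i.succ j
            = ∑ i, y' i * M' i j + (∑ i, y' i * (∑ j', N i.succ j' * e j')) * N 0 j := by
          rw [Finset.sum_mul, ← Finset.sum_add_distrib]
          refine Finset.sum_congr rfl fun i _ => ?_
          rw [hM']; ring
        rw [expand, hsum j, hw', hy₀]
        ring

lemma dot_add_smul {p : ℕ} (v x u : Fin p → ℝ) (s : ℝ) :
    ∑ j, v j * (x j + s * u j) = ∑ j, v j * x j + s * ∑ j, v j * u j := by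
  rw [Finset.mul_sum, ← Finset.sum_add_distrib]
  exact Finset.sum_congr rfl fun j _ => by ring

theorem farkas_fintype {ι : Type} [Fintype ι] {p : ℕ} (N : ι → Fin p → ℝ) (w : Fin p → ℝ)
    (h : ∀ z : Fin p → ℝ, (∀ i, ∑ j, N i j * z j ≤ 0) → ∑ j, w j * z j ≤ 0) :
    ∃ y : ι → ℝ, (∀ i, 0 ≤ y i) ∧ ∀ j, ∑ i, y i * N i j = w j := by
  classical
  obtain ⟨e⟩ : Nonempty (ι ≃ Fin (Fintype.card ι)) := ⟨Fintype.equivFin ι⟩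
  obtain ⟨y, hy, hsum⟩ := farkas_core (Fintype.card ι) (fun i' => N (e.symm i')) w
    (fun z hz => h z fun i => by simpa using hz (e i))
  refine ⟨fun i => y (e i), fun i => hy (e i), fun j => ?_⟩
  rw [← hsum j]
  exact Fintype.sum_equiv e _ _ fun i => by simp

/-- Farkas alternative: infeasible system gives a certificate. -/
theorem farkas_alt {ι : Type} [Fintype ι] {p : ℕ} (R : ι → Fin p → ℝ) (q : ι → ℝ)
    (h : ¬ ∃ x : Fin p → ℝ, ∀ i, ∑ j, R i j * x j ≤ q i) :
    ∃ y : ι → ℝ, (∀ i, 0 ≤ y i) ∧ (∀ j, ∑ i, y i * R i j = 0) ∧ ∑ i, y i * q i < 0 := by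
  classical
  have hhyp : ∀ z : Fin (p+1) → ℝ,
      (∀ i, ∑ j, (fun i => Fin.cons (-(q i)) (R i) : ι → Fin (p+1) → ℝ) i j * z j ≤ 0) →
      ∑ j, (Fin.cons 1 0 : Fin (p+1) → ℝ) j * z j ≤ 0 := by
    intro z hz
    simp only [Fin.sum_univ_succ, Fin.cons_zero, Fin.cons_succ] at hz ⊢
    simp only [Pi.zero_apply, zero_mul, Finset.sum_const_zero, add_zero, one_mul]
    by_contra hpos
    push_neg at hpos
    apply h
    refine ⟨fun j => z j.succ / z 0, fun i => ?_⟩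
    have hi := hz i
    have hsum' : ∑ j, R i j * (z j.succ / z 0) = (∑ j, R i j * z j.succ) / z 0 := by
      rw [Finset.sum_div]
      exact Finset.sum_congr rfl fun j _ => by ring
    rw [hsum']
    rw [div_le_iff₀ hpos]
    linarith
  obtain ⟨y, hy, hsum⟩ := farkas_fintype _ _ hhyp
  have h0 := hsum 0
  simp [Fin.sum_univ_succ] at h0
  refine ⟨y, hy, fun j => ?_, ?_⟩
  · have hj := hsum j.succ
    simpa [Fin.sum_univ_succ] using hj
  · linarith

/-- Affine Farkas: a valid inequality over a nonempty polyhedron is a consequence. -/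
theorem farkas_imp {ι : Type} [Fintype ι] {p : ℕ} (R : ι → Fin p → ℝ) (q : ι → ℝ)
    (g : Fin p → ℝ) (h : ℝ)
    (hfeas : ∃ x : Fin p → ℝ, ∀ i, ∑ j, R i j * x j ≤ q i)
    (himp : ∀ x : Fin p → ℝ, (∀ i, ∑ j, R i j * x j ≤ q i) → ∑ j, g j * x j ≤ h) :
    ∃ y : ι → ℝ, (∀ i, 0 ≤ y i) ∧ (∀ j, ∑ i, y i * R i j = g j) ∧ ∑ i, y i * q i ≤ h := by
  classical
  obtain ⟨x₀, hx₀⟩ := hfeas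
  have hhyp : ∀ z : Fin (p+1) → ℝ,
      (∀ o : Option ι, ∑ j, (fun o : Option ι => Option.elim o (Fin.cons (-1) 0)
        (fun i => Fin.cons (-(q i)) (R i)) : Option ι → Fin (p+1) → ℝ) o j * z j ≤ 0) →
      ∑ j, (Fin.cons (-h) g : Fin (p+1) → ℝ) j * z j ≤ 0 := by
    intro z hz
    have hz0 : 0 ≤ z 0 := by
      have := hz none
      simpa [Fin.sum_univ_succ] using this
    have hzi : ∀ i : ι, ∑ j, R i j * z j.succ ≤ q i * z 0 := by
      intro i
      have := hz (some i)
      simp only [Option.elim, Fin.sum_univ_succ, Fin.cons_zero, Fin.cons_succ] at this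
      linarith
    simp only [Fin.sum_univ_succ, Fin.cons_zero, Fin.cons_succ]
    rcases lt_or_eq_of_le hz0 with hpos | hzero
    · have := himp (fun j => z j.succ / z 0) ?_
      · have hgs : ∑ j, g j * (z j.succ / z 0) = (∑ j, g j * z j.succ) / z 0 := by
          rw [Finset.sum_div]
          exact Finset.sum_congr rfl fun j _ => by ring
        rw [hgs, div_le_iff₀ hpos] at this
        nlinarith
      · intro i
        have hsum' : ∑ j, R i j * (z j.succ / z 0) = (∑ j, R i j * z j.succ) / z 0 := by
          rw [Finset.sum_div]
          exact Finset.sum_congr rfl fun j _ => by ring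
        rw [hsum', div_le_iff₀ hpos]
        linarith [hzi i]
    · -- z 0 = 0 : recession direction
      have hrec : ∀ i : ι, ∑ j, R i j * z j.succ ≤ 0 := by
        intro i; have := hzi i; rw [← hzero] at this; linarith [this]
      have hgu : ∑ j, g j * z j.succ ≤ 0 := by
        by_contra hg
        push_neg at hg
        set u : Fin p → ℝ := fun j => z j.succ with hu
        set s : ℝ := (h - ∑ j, g j * x₀ j) / (∑ j, g j * u j) + 1 with hs
        have hgx₀ : ∑ j, g j * x₀ j ≤ h := himp x₀ hx₀
        have hspos : 0 ≤ s := by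
          rw [hs]
          have : 0 ≤ (h - ∑ j, g j * x₀ j) / (∑ j, g j * u j) :=
            div_nonneg (by linarith) (le_of_lt hg)
          linarith
        have hfeas' : ∀ i, ∑ j, R i j * (x₀ j + s * u j) ≤ q i := by
          intro i
          rw [dot_add_smul]
          have := mul_nonpos_of_nonneg_of_nonpos hspos (hrec i)
          linarith [hx₀ i]
        have := himp _ hfeas'
        rw [dot_add_smul] at this
        have hkey : s * ∑ j, g j * u j = (h - ∑ j, g j * x₀ j) + ∑ j, g j * u j := by
          have hne : ∑ j, g j * u j ≠ 0 := ne_of_gt hg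
          rw [hs]
          field_simp
        rw [hkey] at this
        linarith
      rw [← hzero]
      linarith
  obtain ⟨y, hy, hsum⟩ := farkas_fintype _ _ hhyp
  refine ⟨fun i => y (some i), fun i => hy (some i), fun j => ?_, ?_⟩
  · have hj := hsum j.succ
    simpa [Fintype.sum_option, Fin.sum_univ_succ] using hj
  · have h0 := hsum 0
    simp [Fintype.sum_option, Fin.sum_univ_succ] at h0
    have := hy none
    show ∑ i, y (some i) * q i ≤ h
    linarith

lemma swap_dot {m n : ℕ} (lam : Fin m → ℝ) (A : Matrix (Fin m) (Fin n) ℝ) (x : Fin n → ℝ) :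
    ∑ j, (∑ i, lam i * A i j) * x j = ∑ i, lam i * (∑ j, A i j * x j) := by
  simp_rw [Finset.sum_mul, Finset.mul_sum]
  rw [Finset.sum_comm]
  exact Finset.sum_congr rfl fun i _ => Finset.sum_congr rfl fun j _ => by ring

/-- Motzkin's Transposition Theorem. -/
theorem motzkin_transposition {m n l : ℕ}
    (A : Matrix (Fin m) (Fin n) ℝ) (C : Matrix (Fin l) (Fin n) ℝ)
    (b : Fin m → ℝ) (d : Fin l → ℝ) :
    (∀ x : Fin n → ℝ,
      ¬ ((∀ i, (∑ j, A i j * x j) ≤ b i) ∧ (∀ i, (∑ j, C i j * x j) < d i))) ↔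
    (∃ lam : Fin m → ℝ, ∃ mu : Fin l → ℝ,
      (∀ i, 0 ≤ lam i) ∧ (∀ i, 0 ≤ mu i) ∧
      (∀ j, (∑ i, lam i * A i j) + (∑ i, mu i * C i j) = 0) ∧
      (∑ i, lam i * b i) + (∑ i, mu i * d i) ≤ 0 ∧
      ((∑ i, lam i * b i) < 0 ∨ mu ≠ 0)) := by
  constructor
  · intro hM1
    by_cases hfeas : ∃ x : Fin n → ℝ,
        ∀ i : Fin m ⊕ Fin l, ∑ j, (Sum.elim (A ·) (C ·) i) j * x j ≤ Sum.elim b d i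
    · -- weak system feasible: use affine Farkas on augmented system with slack coordinate 0
      obtain ⟨x₀, hx₀⟩ := hfeas
      have hfeas' : ∃ x : Fin (n+1) → ℝ, ∀ i : Fin m ⊕ Fin l,
          ∑ j, ((Sum.elim (fun i => Fin.cons 0 (A i)) (fun i => Fin.cons 1 (C i)) : Fin m ⊕ Fin l → Fin (n+1) → ℝ) i) j * x j
            ≤ Sum.elim b d i := by
        refine ⟨Fin.cons 0 x₀, fun i => ?_⟩
        rcases i with i | i
        · simpa [Fin.sum_univ_succ] using hx₀ (Sum.inl i)
        · simpa [Fin.sum_univ_succ] using hx₀ (Sum.inr i)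
      have himp : ∀ x : Fin (n+1) → ℝ, (∀ i : Fin m ⊕ Fin l,
          ∑ j, ((Sum.elim (fun i => Fin.cons 0 (A i)) (fun i => Fin.cons 1 (C i)) : Fin m ⊕ Fin l → Fin (n+1) → ℝ) i) j * x j
            ≤ Sum.elim b d i) →
          ∑ j, (Fin.cons 1 0 : Fin (n+1) → ℝ) j * x j ≤ 0 := by
        intro x hx
        simp only [Fin.sum_univ_succ, Fin.cons_zero, Fin.cons_succ, Pi.zero_apply,
          zero_mul, Finset.sum_const_zero, add_zero, one_mul]
        by_contra hpos
        push_neg at hpos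
        refine hM1 (fun j => x j.succ) ⟨fun i => ?_, fun i => ?_⟩
        · have := hx (Sum.inl i)
          simpa [Fin.sum_univ_succ] using this
        · have := hx (Sum.inr i)
          simp only [Sum.elim_inl, Sum.elim_inr, Fin.sum_univ_succ, Fin.cons_zero,
            Fin.cons_succ, one_mul] at this
          linarith
      obtain ⟨y, hy, hrow, hq⟩ := farkas_imp _ _ _ _ hfeas' himp
      refine ⟨fun i => y (Sum.inl i), fun i => y (Sum.inr i),
        fun i => hy _, fun i => hy _, ?_, ?_, ?_⟩
      · intro j
        have := hrow j.succ
        simpa [Fintype.sum_sum_type, Fin.sum_univ_succ] using this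
      · simpa [Fintype.sum_sum_type] using hq
      · right
        have h0 := hrow 0
        simp [Fintype.sum_sum_type, Fin.sum_univ_succ] at h0
        intro hmu
        rw [hmu] at h0
        simp at h0
    · -- weak system infeasible: use Farkas alternative
      obtain ⟨y, hy, hrow, hq⟩ := farkas_alt _ _ hfeas
      refine ⟨fun i => y (Sum.inl i), fun i => y (Sum.inr i),
        fun i => hy _, fun i => hy _, ?_, ?_, ?_⟩
      · intro j
        have := hrow j
        simpa [Fintype.sum_sum_type] using this
      · have := hq
        simp [Fintype.sum_sum_type] at this
        linarith
      · by_cases hmu : (fun i => y (Sum.inr i)) = 0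
        · left
          have := hq
          simp [Fintype.sum_sum_type] at this
          have hz : ∑ i, y (Sum.inr i) * d i = 0 := by
            apply Finset.sum_eq_zero
            intro i _
            have : y (Sum.inr i) = 0 := congrFun hmu i
            rw [this]; ring
          linarith
        · right; exact hmu
  · rintro ⟨lam, mu, hl, hm, hrow, hle, hor⟩ x ⟨hA, hC⟩
    have hz : ∑ j, ((∑ i, lam i * A i j) + (∑ i, mu i * C i j)) * x j = 0 :=
      Finset.sum_eq_zero fun j _ => by rw [hrow j]; ring
    have hsplit : ∑ j, ((∑ i, lam i * A i j) + (∑ i, mu i * C i j)) * x j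
        = ∑ i, lam i * (∑ j, A i j * x j) + ∑ i, mu i * (∑ j, C i j * x j) := by
      rw [← swap_dot lam A x, ← swap_dot mu C x, ← Finset.sum_add_distrib]
      exact Finset.sum_congr rfl fun j _ => by ring
    have h1 : ∑ i, lam i * (∑ j, A i j * x j) ≤ ∑ i, lam i * b i :=
      Finset.sum_le_sum fun i _ => mul_le_mul_of_nonneg_left (hA i) (hl i)
    by_cases hmu : mu = 0
    · have hlb : ∑ i, lam i * b i < 0 := by
        rcases hor with h' | h'
        · exact h'
        · exact absurd hmu h'
      have h2 : ∑ i, mu i * (∑ j, C i j * x j) = 0 :=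
        Finset.sum_eq_zero fun i _ => by rw [congrFun hmu i]; simp
      rw [hsplit, h2] at hz
      linarith
    · obtain ⟨k, hk⟩ : ∃ k, mu k ≠ 0 := Function.ne_iff.mp hmu
      have hkpos : 0 < mu k := lt_of_le_of_ne (hm k) (Ne.symm hk)
      have h2 : ∑ i, mu i * (∑ j, C i j * x j) < ∑ i, mu i * d i := by
        apply Finset.sum_lt_sum
        · intro i _
          exact mul_le_mul_of_nonneg_left (le_of_lt (hC i)) (hm i)
        · exact ⟨k, Finset.mem_univ k, (mul_lt_mul_iff_right₀ hkpos).mpr (hC k)⟩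
      rw [hsplit] at hz
      linarith
end

section
/- There do not exist k ≥ 1, reals δ₁, …, δ_k > 0, and affine-linear functions f₁, …, f_k : ℝ² → ℝ such that for all a, b, a', b' ∈ ℝ with a > b, b > 1, a' = 2a, and b' = 3b, the k-phase conditions hold: (∃ i ∈ {1,…,k}, fᵢ(a,b) > 0) ∧ f₁(a',b') < f₁(a,b) − δ₁ ∧ (∀ i ∈ {2,…,k}, fᵢ(a',b') < fᵢ(a,b) − δᵢ ∨ fᵢ₋₁(a,b) > 0). (The conjunctive linear loop program a > b ∧ b > 1 ∧ a' = 2a ∧ b' = 3b has no multiphase ranking function.) -/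
private lemma myRankSlopeNeg (α β δ : ℝ) (hδ : 0 < δ)
    (h : ∀ c : ℝ, 1 < c → ∃ T : ℝ, ∀ t : ℝ, T < t → 1 < t → (c * α + 2 * β) * t < -δ) :
    ∀ c : ℝ, 1 < c → c * α + β < 0 := by
  have h1 : ∀ c : ℝ, 1 < c → c * α + 2 * β < 0 := by
    intro c hc
    obtain ⟨T, hT⟩ := h c hc
    have ht := hT (max T 1 + 1) (by simp [lt_of_le_of_lt (le_max_left T 1)]) (by
      have := le_max_right T 1; linarith)
    have htpos : (0:ℝ) < max T 1 + 1 := by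
      have := le_max_right T 1; linarith
    nlinarith
  have hα : α ≤ 0 := by
    by_contra hpos
    push_neg at hpos
    have hc : (1:ℝ) < max 2 ((1 - 2 * β) / α) := lt_of_lt_of_le one_lt_two (le_max_left _ _)
    have h2 := h1 _ hc
    have : (1 - 2 * β) / α ≤ max 2 ((1 - 2 * β) / α) := le_max_right _ _
    have : (1 - 2 * β) ≤ max 2 ((1 - 2 * β) / α) * α := by
      rw [div_le_iff₀ hpos] at this; linarith
    linarith
  have hαβ : α + 2 * β ≤ 0 := by
    rcases eq_or_lt_of_le hα with heq | hlt
    · have := h1 2 one_lt_two; nlinarith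
    · by_contra hpos
      push_neg at hpos
      have hcgt : (1:ℝ) < 1 + (α + 2 * β) / (-2 * α) := by
        have : 0 < (α + 2 * β) / (-2 * α) := div_pos hpos (by linarith)
        linarith
      have h2 := h1 _ hcgt
      have hne : (-2 * α) ≠ 0 := by intro h0; nlinarith
      have : (1 + (α + 2 * β) / (-2 * α)) * α + 2 * β = (α + 2 * β) * (1 - 1/2) + ((α + 2*β)/(-2*α)) * α + (α+2*β)/2 := by
        field_simp; ring
      nlinarith [div_pos hpos (show (0:ℝ) < -2*α by linarith),
        mul_div_cancel₀ (α + 2*β) hne]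
  intro c hc
  rcases eq_or_lt_of_le hα with heq | hlt
  · have := h1 2 one_lt_two
    nlinarith
  · nlinarith

private lemma ray_nonpos (g : ℝ → ℝ → ℝ) (α β γ δ : ℝ) (hδ : 0 < δ)
    (hform : ∀ a b : ℝ, g a b = α * a + β * b + γ)
    (hdec : ∀ c : ℝ, 1 < c → ∃ T : ℝ, ∀ t : ℝ, T < t → 1 < t →
      g (2 * (c * t)) (3 * t) < g (c * t) t - δ) :
    ∀ c : ℝ, 1 < c → ∃ T : ℝ, ∀ t : ℝ, T < t → 1 < t → g (c * t) t ≤ 0 := by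
  have hkey : ∀ c : ℝ, 1 < c → c * α + β < 0 := by
    apply myRankSlopeNeg α β δ hδ
    intro c hc
    obtain ⟨T, hT⟩ := hdec c hc
    refine ⟨T, fun t hTt h1t => ?_⟩
    have := hT t hTt h1t
    rw [hform, hform] at this
    nlinarith
  intro c hc
  have hs := hkey c hc
  refine ⟨max (γ / (-(c * α + β))) 1, fun t hTt h1t => ?_⟩
  rw [hform]
  have h2 : γ / (-(c * α + β)) < t := lt_of_le_of_lt (le_max_left _ _) hTt
  have h3 : γ < t * (-(c * α + β)) := by
    rw [div_lt_iff₀ (by linarith : (0:ℝ) < -(c * α + β))] at h2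
    linarith
  nlinarith

/-- The conjunctive linear loop program `a > b ∧ b > 1 ∧ a' = 2a ∧ b' = 3b`
does not have a multiphase ranking function. -/
theorem no_multiphase_ranking_function :
    ¬ ∃ (k : ℕ), 1 ≤ k ∧
      ∃ δ : ℕ → ℝ, (∀ i ∈ Finset.Icc 1 k, 0 < δ i) ∧
      ∃ f : ℕ → ℝ → ℝ → ℝ,
        (∀ i ∈ Finset.Icc 1 k, ∃ α β γ : ℝ, ∀ a b : ℝ, f i a b = α * a + β * b + γ) ∧
        (∀ a b a' b' : ℝ, a > b → b > 1 → a' = 2 * a → b' = 3 * b →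
          ((∃ i ∈ Finset.Icc 1 k, f i a b > 0) ∧
           f 1 a' b' < f 1 a b - δ 1 ∧
           (∀ i ∈ Finset.Icc 2 k,
             f i a' b' < f i a b - δ i ∨ f (i - 1) a b > 0))) := by
  rintro ⟨k, hk, δ, hδ, f, hlin, hstep⟩
  -- the guard holds at points (c*t, t) with c > 1, t > 1
  have hguard : ∀ (c t : ℝ), 1 < c → 1 < t → c * t > t := by
    intro c t hc ht
    nlinarith
  -- main claim: each f i is eventually nonpositive on each ray a = c*b
  have key : ∀ i : ℕ, 1 ≤ i → i ≤ k → ∀ c : ℝ, 1 < c →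
      ∃ T : ℝ, ∀ t : ℝ, T < t → 1 < t → f i (c * t) t ≤ 0 := by
    intro i hi
    induction i, hi using Nat.le_induction with
    | base =>
      intro hik
      have hmem : 1 ∈ Finset.Icc 1 k := Finset.mem_Icc.mpr ⟨le_refl 1, hk⟩
      obtain ⟨α, β, γ, hform⟩ := hlin 1 hmem
      apply ray_nonpos (f 1) α β γ (δ 1) (hδ 1 hmem) hform
      intro c hc
      refine ⟨0, fun t _ h1t => ?_⟩
      exact (hstep (c * t) t (2 * (c * t)) (3 * t) (hguard c t hc h1t) h1t rfl rfl).2.1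
    | succ i hi ih =>
      intro hik
      have hik' : i ≤ k := le_trans (Nat.le_succ i) hik
      have hmem : i + 1 ∈ Finset.Icc 1 k := Finset.mem_Icc.mpr ⟨by omega, hik⟩
      have hmem2 : i + 1 ∈ Finset.Icc 2 k := Finset.mem_Icc.mpr ⟨by omega, hik⟩
      obtain ⟨α, β, γ, hform⟩ := hlin (i + 1) hmem
      apply ray_nonpos (f (i + 1)) α β γ (δ (i + 1)) (hδ (i + 1) hmem) hform
      intro c hc
      obtain ⟨T, hT⟩ := ih hik' c hc
      refine ⟨T, fun t hTt h1t => ?_⟩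
      have hstep' := (hstep (c * t) t (2 * (c * t)) (3 * t) (hguard c t hc h1t) h1t rfl rfl).2.2
        (i + 1) hmem2
      rcases hstep' with h | h
      · exact h
      · exfalso
        have : f i (c * t) t ≤ 0 := hT t hTt h1t
        simp only [Nat.add_sub_cancel] at h
        linarith
  -- extract uniform thresholds on the ray a = 2*b
  have key2 : ∀ i : ℕ, ∃ T : ℝ, ∀ t : ℝ, T < t → 1 < t → i ∈ Finset.Icc 1 k →
      f i (2 * t) t ≤ 0 := by
    intro i
    by_cases hmem : i ∈ Finset.Icc 1 k
    · obtain ⟨hi1, hik⟩ := Finset.mem_Icc.mp hmem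
      obtain ⟨T, hT⟩ := key i hi1 hik 2 one_lt_two
      exact ⟨T, fun t h1 h2 _ => hT t h1 h2⟩
    · exact ⟨0, fun t _ _ h => absurd h hmem⟩
  choose T hT using key2
  have hne : (Finset.Icc 1 k).Nonempty := Finset.nonempty_Icc.mpr hk
  set t : ℝ := max ((Finset.Icc 1 k).sup' hne T) 1 + 1 with ht
  have h1t : 1 < t := by
    have := le_max_right ((Finset.Icc 1 k).sup' hne T) 1
    simp only [ht]; linarith
  obtain ⟨i, hi, hpos⟩ := (hstep (2 * t) t (2 * (2 * t)) (3 * t)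
    (hguard 2 t one_lt_two h1t) h1t rfl rfl).1
  have hTi : T i < t := by
    have h1 : T i ≤ (Finset.Icc 1 k).sup' hne T := Finset.le_sup' T hi
    have h2 := le_max_left ((Finset.Icc 1 k).sup' hne T) 1
    simp only [ht]; linarith
  have := hT i t hTi h1t hi
  linarith
end

section
/- Let T be the binary relation {((q, y), (q', y')) ∈ ℝ² × ℝ² : (q > 0 ∨ y > 0) ∧ y' = y − 1 ∧ q' ≤ q ∧ (y ≤ 0 → q' = q − 1)}. Then there do not exist k ≥ 1, a real δ > 0, and affine-linear functions f₁, …, f_k : ℝ² → ℝ such that for all ((q,y),(q',y')) ∈ T the k-nested conditions hold: f_k(q,y) > 0 ∧ f₁(q',y') < f₁(q,y) − δ ∧ (∀ i ∈ {2,…,k}, fᵢ(q',y') < fᵢ(q,y) + fᵢ₋₁(q,y)). (This program has a 2-phase ranking function but no nested ranking function, so the multiphase template is strictly more powerful than the nested template.) -/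
/-- An affine function positive on all enabled states must be constant. -/
lemma aff_const_aux (α β γ : ℝ)
    (h : ∀ q y : ℝ, (q > 0 ∨ y > 0) → 0 < α * q + β * y + γ) :
    α = 0 ∧ β = 0 := by
  have hα : α = 0 := by
    by_contra hα
    have h1 := h ((-1 - β - γ) / α) 1 (Or.inr one_pos)
    have h2 : α * ((-1 - β - γ) / α) = -1 - β - γ := by field_simp
    rw [h2] at h1
    linarith
  refine ⟨hα, ?_⟩
  by_contra hβ
  have h1 := h 1 ((-1 - α - γ) / β) (Or.inl one_pos)
  have h2 : β * ((-1 - α - γ) / β) = -1 - α - γ := by field_simp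
  rw [h2] at h1
  linarith

/-- The linear loop program
`(q > 0 ∨ y > 0) ∧ y' = y − 1 ∧ q' ≤ q ∧ (y ≤ 0 → q' = q − 1)`
does not have a nested ranking function. -/
theorem no_nested_ranking_function :
    ¬ ∃ (k : ℕ), 1 ≤ k ∧
      ∃ δ : ℝ, 0 < δ ∧
      ∃ f : ℕ → ℝ → ℝ → ℝ,
        (∀ i ∈ Finset.Icc 1 k, ∃ α β γ : ℝ, ∀ q y : ℝ, f i q y = α * q + β * y + γ) ∧
        (∀ q y q' y' : ℝ,
          ((q > 0 ∨ y > 0) ∧ y' = y - 1 ∧ q' ≤ q ∧ (y ≤ 0 → q' = q - 1)) →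
          (f k q y > 0 ∧
           f 1 q' y' < f 1 q y - δ ∧
           (∀ i ∈ Finset.Icc 2 k, f i q' y' < f i q y + f (i - 1) q y))) := by
  rintro ⟨k, hk, δ, hδ, f, haff, htr⟩
  -- every enabled state is the source of some transition
  have hsrc : ∀ q y : ℝ, (q > 0 ∨ y > 0) → ∃ q' y',
      (q > 0 ∨ y > 0) ∧ y' = y - 1 ∧ q' ≤ q ∧ (y ≤ 0 → q' = q - 1) := by
    intro q y hqy
    by_cases hy : y > 0
    · exact ⟨q, y - 1, hqy, rfl, le_refl q, fun h => absurd h (not_le.mpr hy)⟩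
    · exact ⟨q - 1, y - 1, hqy, rfl, by linarith, fun _ => rfl⟩
  -- downward induction: f i is positive on all enabled states
  have key : ∀ j : ℕ, ∀ i : ℕ, i + j = k → 1 ≤ i →
      ∀ q y : ℝ, (q > 0 ∨ y > 0) → 0 < f i q y := by
    intro j
    induction j with
    | zero =>
      intro i hik _ q y hqy
      obtain ⟨q', y', hT⟩ := hsrc q y hqy
      have := (htr q y q' y' hT).1
      simpa [← hik] using this
    | succ j ih =>
      intro i hik hi1 q y hqy
      have hik' : (i + 1) + j = k := by omega
      have hpos : ∀ q y : ℝ, (q > 0 ∨ y > 0) → 0 < f (i + 1) q y :=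
        ih (i + 1) hik' (by omega)
      obtain ⟨α, β, γ, hf⟩ := haff (i + 1) (Finset.mem_Icc.mpr ⟨by omega, by omega⟩)
      have hconst : α = 0 ∧ β = 0 := by
        apply aff_const_aux
        intro a b hab
        have := hpos a b hab
        rwa [hf] at this
      obtain ⟨q', y', hT⟩ := hsrc q y hqy
      have hnest := (htr q y q' y' hT).2.2 (i + 1)
        (Finset.mem_Icc.mpr ⟨by omega, by omega⟩)
      rw [hf, hf, hconst.1, hconst.2] at hnest
      simpa using hnest
  -- apply to f 1
  have h1pos : ∀ q y : ℝ, (q > 0 ∨ y > 0) → 0 < f 1 q y :=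
    key (k - 1) 1 (by omega) le_rfl
  obtain ⟨α, β, γ, hf⟩ := haff 1 (Finset.mem_Icc.mpr ⟨le_rfl, hk⟩)
  have hconst : α = 0 ∧ β = 0 := by
    apply aff_const_aux
    intro a b hab
    have := h1pos a b hab
    rwa [hf] at this
  -- transition (0,1) → (0,0)
  have hT : ((0:ℝ) > 0 ∨ (1:ℝ) > 0) ∧ (0:ℝ) = 1 - 1 ∧ (0:ℝ) ≤ 0 ∧ ((1:ℝ) ≤ 0 → (0:ℝ) = 0 - 1) := by
    refine ⟨Or.inr one_pos, by ring, le_rfl, fun h => absurd h (by norm_num)⟩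
  have hdec := (htr 0 1 0 0 hT).2.1
  rw [hf, hf, hconst.1, hconst.2] at hdec
  simp at hdec
  linarith
end

section
/- The binary relation {((q, y), (q', y')) ∈ ℝ² × ℝ² : q > 0 ∧ q' = q − y ∧ y' = y + 1} is well-founded. (The linear loop program q > 0 ∧ q' = q − y ∧ y' = y + 1 terminates; it has a 2-phase ranking function with f₁(q,y) = 1 − y, f₂(q,y) = q + 1, δ₁ = δ₂ = 1/2.) -/
/-- The linear loop program `q > 0 ∧ q' = q − y ∧ y' = y + 1` terminates. -/
theorem loop_multiphase_intro_wellFounded :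
    WellFounded (fun p' p : ℝ × ℝ =>
      p.1 > 0 ∧ p'.1 = p.1 - p.2 ∧ p'.2 = p.2 + 1) := by
  have hwf : WellFounded (InvImage (Prod.Lex (· < ·) (· < ·))
      (fun p : ℝ × ℝ => ((Int.ceil (1 - p.2)).toNat, (Int.ceil p.1).toNat))) :=
    InvImage.wf _ (WellFounded.prod_lex Nat.lt_wfRel.wf Nat.lt_wfRel.wf)
  refine Subrelation.wf ?_ hwf
  rintro p' p ⟨hq, hq', hy'⟩
  unfold InvImage
  by_cases hy : p.2 < 1
  · apply Prod.Lex.left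
    have h1 : (0:ℤ) < Int.ceil (1 - p.2) := by
      rw [Int.lt_ceil]; push_cast; linarith
    have h2 : Int.ceil (1 - p'.2) < Int.ceil (1 - p.2) := by
      rw [hy']
      have : (1 : ℝ) - (p.2 + 1) = (1 - p.2) - 1 := by ring
      rw [this, Int.ceil_sub_one]
      omega
    omega
  · push_neg at hy
    have h1 : Int.ceil (1 - p'.2) ≤ 0 := by
      rw [hy']
      apply Int.ceil_le.mpr; push_cast; linarith
    have h1' : Int.ceil (1 - p.2) ≤ 0 := by
      apply Int.ceil_le.mpr; push_cast; linarith
    have heq : (Int.ceil (1 - p'.2)).toNat = (Int.ceil (1 - p.2)).toNat := by omega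
    dsimp only
    rw [heq]
    apply Prod.Lex.right
    have h2 : (0:ℤ) < Int.ceil p.1 := by rw [Int.lt_ceil]; push_cast; linarith
    have h3 : Int.ceil p'.1 < Int.ceil p.1 := by
      rw [hq']
      calc Int.ceil (p.1 - p.2) ≤ Int.ceil (p.1 - 1) := by
            apply Int.ceil_le_ceil; linarith
        _ = Int.ceil p.1 - 1 := Int.ceil_sub_one p.1
        _ < Int.ceil p.1 := by omega
    omega
end

section
/- The binary relation {((q, y), (q', y')) ∈ ℝ² × ℝ² : (q > 0 ∧ y > 0 ∧ y' = y ∧ q' = q − y − 1) ∨ (q > 0 ∧ y ≤ 0 ∧ y' = y ∧ q' = q + y − 1)} is well-founded. (The linear loop program of Example 2.6 terminates.) -/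
/-- The linear loop program of Example 2.6 terminates. -/
theorem loop_example_2_6_wellFounded :
    WellFounded (fun p' p : ℝ × ℝ =>
      (p.1 > 0 ∧ p.2 > 0 ∧ p'.2 = p.2 ∧ p'.1 = p.1 - p.2 - 1) ∨
      (p.1 > 0 ∧ p.2 ≤ 0 ∧ p'.2 = p.2 ∧ p'.1 = p.1 + p.2 - 1)) := by
  have : Subrelation (fun p' p : ℝ × ℝ =>
      (p.1 > 0 ∧ p.2 > 0 ∧ p'.2 = p.2 ∧ p'.1 = p.1 - p.2 - 1) ∨
      (p.1 > 0 ∧ p.2 ≤ 0 ∧ p'.2 = p.2 ∧ p'.1 = p.1 + p.2 - 1))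
      (InvImage Nat.lt (fun p => ⌈p.1⌉₊)) := by
    intro p' p h
    have hq : (0:ℝ) < p.1 := by rcases h with ⟨h,_⟩|⟨h,_⟩ <;> exact h
    have hle : p'.1 ≤ p.1 - 1 := by
      rcases h with ⟨_,hy,_,hq'⟩|⟨_,hy,_,hq'⟩ <;> rw [hq'] <;> linarith
    have h1 : 1 ≤ ⌈p.1⌉₊ := Nat.ceil_pos.mpr hq
    have h2 : ⌈p'.1⌉₊ ≤ ⌈p.1⌉₊ - 1 := by
      rw [Nat.ceil_le]
      have : p.1 ≤ (⌈p.1⌉₊ : ℝ) := Nat.le_ceil _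
      have hcast : ((⌈p.1⌉₊ - 1 : ℕ) : ℝ) = (⌈p.1⌉₊ : ℝ) - 1 := by
        push_cast [h1]; ring
      rw [hcast]; linarith
    exact lt_of_le_of_lt h2 (Nat.sub_lt (lt_of_lt_of_le Nat.zero_lt_one h1) Nat.one_pos)
  exact this.wf (InvImage.wf _ Nat.lt_wfRel.wf)
end

section
/- The binary relation {((q, p), (q', p')) ∈ ℝ² × ℝ² : (q > 0 ∧ p > 0 ∧ q < p ∧ q' = q − 1) ∨ (q > 0 ∧ p > 0 ∧ p < q ∧ p' = p − 1)} is well-founded. (This linear loop program terminates; it is ranked by the 2-piece ranking function with ranking pieces f₁(q,p) = p and f₂(q,p) = q, step size δ = 1/2, and discriminators g₁(q,p) = q − p and g₂(q,p) = p − q.) -/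
/-- The linear loop program
`(q > 0 ∧ p > 0 ∧ q < p ∧ q' = q − 1) ∨ (q > 0 ∧ p > 0 ∧ p < q ∧ p' = p − 1)`
terminates. -/
theorem loop_piecewise_wellFounded :
    WellFounded (fun s' s : ℝ × ℝ =>
      (s.1 > 0 ∧ s.2 > 0 ∧ s.1 < s.2 ∧ s'.1 = s.1 - 1) ∨
      (s.1 > 0 ∧ s.2 > 0 ∧ s.2 < s.1 ∧ s'.2 = s.2 - 1)) := by
  have hsub : Subrelation
      (fun s' s : ℝ × ℝ =>
        (s.1 > 0 ∧ s.2 > 0 ∧ s.1 < s.2 ∧ s'.1 = s.1 - 1) ∨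
        (s.1 > 0 ∧ s.2 > 0 ∧ s.2 < s.1 ∧ s'.2 = s.2 - 1))
      (InvImage (· < ·) (fun s : ℝ × ℝ => ⌈min s.1 s.2⌉₊)) := by
    intro s' s h
    have hpos : 0 < min s.1 s.2 := by
      rcases h with ⟨hq, hp, _, _⟩ | ⟨hq, hp, _, _⟩ <;> simp [lt_min_iff, hq, hp]
    have hstep : min s'.1 s'.2 ≤ min s.1 s.2 - 1 := by
      rcases h with ⟨hq, hp, hlt, he⟩ | ⟨hq, hp, hlt, he⟩
      · calc min s'.1 s'.2 ≤ s'.1 := min_le_left _ _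
          _ = s.1 - 1 := he
          _ = min s.1 s.2 - 1 := by rw [min_eq_left hlt.le]
      · calc min s'.1 s'.2 ≤ s'.2 := min_le_right _ _
          _ = s.2 - 1 := he
          _ = min s.1 s.2 - 1 := by rw [min_eq_right hlt.le]
    show ⌈min s'.1 s'.2⌉₊ < ⌈min s.1 s.2⌉₊
    have hc1 : 1 ≤ ⌈min s.1 s.2⌉₊ := Nat.ceil_pos.mpr hpos
    have hle : ⌈min s'.1 s'.2⌉₊ ≤ ⌈min s.1 s.2⌉₊ - 1 := by
      apply Nat.ceil_le.mpr
      push_cast [hc1]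
      calc min s'.1 s'.2 ≤ min s.1 s.2 - 1 := hstep
        _ ≤ (⌈min s.1 s.2⌉₊ : ℝ) - 1 := by
            linarith [Nat.le_ceil (min s.1 s.2)]
    omega
  exact hsub.wf (InvImage.wf _ Nat.lt_wfRel.wf)
end
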